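/- arXiv:2311.05002 — 2 statements merged into one kernel-verified Lean document; each statement's English description precedes it below -/
import Mathlib

section
/- Let (n_1,...,n_k) be nonnegative integers summing to n, and set p(n_1,...,n_k) = (n!/(n_1!···n_k!)) · (α_1^{↑n_1}···α_k^{↑n_k})/((α_1+···+α_k)^{↑n}). If n_i/n → x_i with x_i > 0 and x_1+···+x_k = 1 as n → ∞, then n^{k−1} · p(n_1,...,n_k) converges to (Γ(α_1+···+α_k)/(Γ(α_1)···Γ(α_k))) · x_1^{α_1−1}···x_k^{α_k−1}. -/
/-!
Write `a^{↑m} = m! · m^(a-1) · r_a(m)` (`pochhammerRatio`). Euler's limit formula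
`Γ(a) = lim m^a m! / (a(a+1)⋯(a+m))` says exactly that `r_a(m) → 1/Γ(a)`. Dividing out the
factorials, the scaled probability becomes `(∏ r_{α_i}(n_i)) / r_{α_1+⋯+α_k}(n) · ∏ (n_i/n)^(α_i-1)`,
because the powers of `n` balance; each factor converges since every `n_i → ∞`.
-/

open Filter Finset Topology

lemma ascPochhammer_eval_eq_prod_range (a : ℝ) (m : ℕ) :
    (ascPochhammer ℝ m).eval a = ∏ j ∈ range m, (a + j) := by
  induction m with
  | zero => simp
  | succ m ih => rw [ascPochhammer_succ_eval, ih, prod_range_succ]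

noncomputable def pochhammerRatio (a : ℝ) (m : ℕ) : ℝ :=
  (ascPochhammer ℝ m).eval a / (m.factorial * (m : ℝ) ^ (a - 1))

lemma Real.GammaSeq_eq_div_ascPochhammer (a : ℝ) (m : ℕ) :
    Real.GammaSeq a m = (m : ℝ) ^ a * m.factorial / ((ascPochhammer ℝ m).eval a * (a + m)) := by
  rw [Real.GammaSeq, prod_range_succ, ← ascPochhammer_eval_eq_prod_range]

lemma pochhammerRatio_eq_div_GammaSeq {a : ℝ} (ha : 0 < a) {m : ℕ} (hm : 0 < m) :
    pochhammerRatio a m = m / (m + a) / Real.GammaSeq a m := by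
  have hm' : (0 : ℝ) < m := by exact_mod_cast hm
  have hP : 0 < (ascPochhammer ℝ m).eval a := ascPochhammer_pos _ _ ha
  rw [pochhammerRatio, Real.GammaSeq_eq_div_ascPochhammer, Real.rpow_sub_one hm'.ne']
  field_simp
  ring

lemma tendsto_pochhammerRatio {a : ℝ} (ha : 0 < a) :
    Tendsto (pochhammerRatio a) atTop (𝓝 (1 / Real.Gamma a)) := by
  refine ((tendsto_natCast_div_add_atTop a).div (Real.GammaSeq_tendsto_Gamma a)
    (Real.Gamma_pos_of_pos ha).ne').congr' ?_
  filter_upwards [eventually_gt_atTop 0] with m hm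
  exact (pochhammerRatio_eq_div_GammaSeq ha hm).symm

lemma tendsto_atTop_of_tendsto_div_natCast {u : ℕ → ℕ} {c : ℝ} (hc : 0 < c)
    (hu : Tendsto (fun n => (u n : ℝ) / n) atTop (𝓝 c)) : Tendsto u atTop atTop := by
  rw [← tendsto_natCast_atTop_iff (R := ℝ)]
  refine (hu.pos_mul_atTop hc tendsto_natCast_atTop_atTop).congr' ?_
  filter_upwards [eventually_gt_atTop 0] with n hn
  field_simp

lemma natCast_rpow_sum_sub_one {ι : Type*} [Fintype ι] [Nonempty ι] (α : ι → ℝ) {n : ℕ}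
    (hn : 0 < n) :
    (n : ℝ) ^ (∑ i, α i - 1) = (n : ℝ) ^ (Fintype.card ι - 1) * ∏ i, (n : ℝ) ^ (α i - 1) := by
  have hn' : (0 : ℝ) < n := by exact_mod_cast hn
  rw [← Real.rpow_sum_of_pos hn', ← Real.rpow_natCast, ← Real.rpow_add hn',
    Nat.cast_sub Fintype.card_pos, sum_sub_distrib]
  simp only [sum_const, card_univ, nsmul_eq_mul, mul_one, Nat.cast_one]
  ring_nf

lemma polya_scaled_eq_pochhammerRatio {ι : Type*} [Fintype ι] [Nonempty ι] (α : ι → ℝ)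
    (n : ℕ) (hn : 0 < n) (M : ι → ℕ) (hM : ∀ i, 0 < M i) :
    (n : ℝ) ^ (Fintype.card ι - 1) *
        (((n.factorial : ℝ) / ∏ i, ((M i).factorial : ℝ)) *
          ((∏ i, (ascPochhammer ℝ (M i)).eval (α i)) / (ascPochhammer ℝ n).eval (∑ i, α i))) =
      (∏ i, pochhammerRatio (α i) (M i)) / pochhammerRatio (∑ i, α i) n *
        ∏ i, ((M i : ℝ) / n) ^ (α i - 1) := by
  have hn' : (0 : ℝ) < n := by exact_mod_cast hn
  simp only [pochhammerRatio, natCast_rpow_sum_sub_one α hn, prod_div_distrib, prod_mul_distrib,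
    Real.div_rpow (Nat.cast_nonneg _) hn'.le]
  have h1 : ∏ i, ((M i).factorial : ℝ) ≠ 0 := prod_ne_zero_iff.2 fun i _ => by positivity
  have h2 : ∏ i, ((M i : ℝ) ^ (α i - 1)) ≠ 0 := prod_ne_zero_iff.2 fun i _ => by
    have : (0 : ℝ) < M i := by exact_mod_cast hM i
    positivity
  have h3 : ∏ i, ((n : ℝ) ^ (α i - 1)) ≠ 0 := prod_ne_zero_iff.2 fun i _ => by positivity
  field_simp

theorem polya_counts_tendsto_dirichlet_density_general
    {k : ℕ} (hk : 1 ≤ k) (α : Fin k → ℝ) (hα : ∀ i, 0 < α i)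
    (N : ℕ → Fin k → ℕ)
    (x : Fin k → ℝ) (hx : ∀ i, 0 < x i)
    (hlim : ∀ i, Tendsto (fun n => (N n i : ℝ) / n) atTop (nhds (x i))) :
    Tendsto
      (fun n : ℕ => (n : ℝ) ^ (k - 1) *
        (((n.factorial : ℝ) / ∏ i, ((N n i).factorial : ℝ)) *
          ((∏ i, (ascPochhammer ℝ (N n i)).eval (α i)) /
            (ascPochhammer ℝ n).eval (∑ i, α i))))
      atTop
      (nhds ((Real.Gamma (∑ i, α i) / ∏ i, Real.Gamma (α i)) *
        ∏ i, x i ^ (α i - 1))) := by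
  have : Nonempty (Fin k) := Fin.pos_iff_nonempty.1 hk
  have hs : 0 < ∑ i, α i := sum_pos (fun i _ => hα i) univ_nonempty
  have hNtop i : Tendsto (N · i) atTop atTop :=
    tendsto_atTop_of_tendsto_div_natCast (hx i) (hlim i)
  have hratio := (tendsto_finsetProd univ fun i _ =>
    (tendsto_pochhammerRatio (hα i)).comp (hNtop i)).div (tendsto_pochhammerRatio hs)
      (one_div_ne_zero (Real.Gamma_pos_of_pos hs).ne')
  have hpow := tendsto_finsetProd univ fun i _ =>
    (hlim i).rpow_const (p := α i - 1) (Or.inl (hx i).ne')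
  convert (hratio.mul hpow).congr' ?_ using 2
  · simp only [prod_div_distrib, prod_const_one]
    field_simp
  · filter_upwards [eventually_gt_atTop 0,
      eventually_all.2 fun i => (hNtop i).eventually_gt_atTop 0] with n hn hNn
    simpa using (polya_scaled_eq_pochhammerRatio α n hn (N n) hNn).symm

/-- Local limit of the Polya urn label-count probabilities towards the
Dirichlet density: if `N n i / n → x i` with `x i > 0` and `∑ x = 1`, then
`n^(k-1) * p (N n)` converges to the Dirichlet density at `(x 1, …, x k)`. -/
theorem polya_counts_tendsto_dirichlet_density
    {k : ℕ} (hk : 1 ≤ k) (α : Fin k → ℝ) (hα : ∀ i, 0 < α i)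
    (N : ℕ → Fin k → ℕ) (hN : ∀ n, ∑ i, N n i = n)
    (x : Fin k → ℝ) (hx : ∀ i, 0 < x i) (hxsum : ∑ i, x i = 1)
    (hlim : ∀ i, Tendsto (fun n => (N n i : ℝ) / n) atTop (nhds (x i))) :
    Tendsto
      (fun n : ℕ => (n : ℝ) ^ (k - 1) *
        (((n.factorial : ℝ) / ∏ i, ((N n i).factorial : ℝ)) *
          ((∏ i, (ascPochhammer ℝ (N n i)).eval (α i)) /
            (ascPochhammer ℝ n).eval (∑ i, α i))))
      atTop
      (nhds ((Real.Gamma (∑ i, α i) / ∏ i, Real.Gamma (α i)) *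
        ∏ i, x i ^ (α i - 1))) :=
  polya_counts_tendsto_dirichlet_density_general hk α hα N x hx hlim
end

section
/- (Ewens sampling formula) For the Chinese restaurant process with parameters (0, θ), θ > 0, the probability that the partition Π_n of {1,...,n} equals a given partition π with k blocks of sizes n_1,...,n_k is θ^k · ∏_{i=1}^k (n_i − 1)! / θ^{↑n}. -/
open MeasureTheory Finset
open scoped Classical

/-- Probability that, in a Chinese restaurant process with parameters
`(α, θ)`, customer `n` (0-indexed) chooses table `j`, given that the previous
customers chose tables `c 0, …, c (n-1)` (tables are numbered in order of
appearance, so a new table must get the next unused index). -/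
noncomputable def crpStep (α θ : ℝ) (n : ℕ) (c : Fin n → ℕ) (j : ℕ) : ℝ :=
  if n = 0 then (if j = 0 then 1 else 0)
  else
    let t := (univ.filter fun i : Fin n => c i = j).card
    let m := (Finset.image c univ).card
    if 0 < t then (t - α) / (n + θ)
    else if j = m then (m * α + θ) / (n + θ)
    else 0

/-- Probability that the first `n` customers of a Chinese restaurant process
with parameters `(α, θ)` choose the table sequence `c` (tables numbered in
order of appearance). -/
noncomputable def crpProb (α θ : ℝ) : (n : ℕ) → (Fin n → ℕ) → ℝ
  | 0, _ => 1
  | n + 1, c =>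
      crpProb α θ n (Fin.init c) * crpStep α θ n (Fin.init c) (c (Fin.last n))

/-- `c` induces the set partition `π` of `{0, …, n-1}`: two customers lie in
the same block of `π` iff they sit at the same table. -/
def InducesPartition {n : ℕ} (c : Fin n → ℕ)
    (π : Finpartition (univ : Finset (Fin n))) : Prop :=
  ∀ i j : Fin n, (c i = c j ↔ ∃ B ∈ π.parts, i ∈ B ∧ j ∈ B)

/-- Probability that the partition of `{0, …, n-1}` formed by the first `n`
customers of a Chinese restaurant process with parameters `(α, θ)` equals
`π`. -/
noncomputable def crpPartitionProb (α θ : ℝ) (n : ℕ)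
    (π : Finpartition (univ : Finset (Fin n))) : ℝ :=
  ∑ c : Fin n → Fin n,
    if InducesPartition (fun i => (c i : ℕ)) π then crpProb α θ n (fun i => (c i : ℕ))
    else 0

open MeasureTheory Finset
open scoped Classical

/-- Canonicity of a table sequence: each new table gets the next unused index. -/
def Canon : ∀ {n : ℕ}, (Fin n → ℕ) → Prop
  | 0, _ => True
  | n+1, c => Canon (Fin.init c) ∧
      (0 < ((univ : Finset (Fin n)).filter fun i => Fin.init c i = c (Fin.last n)).card ∨
        c (Fin.last n) = (Finset.image (Fin.init c) univ).card)

lemma fiber_card_succ {n : ℕ} (c : Fin (n+1) → ℕ) (v : ℕ) :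
    ((univ : Finset (Fin (n+1))).filter fun i => c i = v).card =
      ((univ : Finset (Fin n)).filter fun i => Fin.init c i = v).card +
        (if c (Fin.last n) = v then 1 else 0) := by
  classical
  rw [Finset.card_filter, Finset.card_filter, Fin.sum_univ_castSucc]
  rfl

lemma image_succ {n : ℕ} (c : Fin (n+1) → ℕ) :
    Finset.image c univ = insert (c (Fin.last n)) (Finset.image (Fin.init c) univ) := by
  ext v
  simp only [Finset.mem_image, Finset.mem_insert, Finset.mem_univ, true_and]
  constructor
  · rintro ⟨i, rfl⟩
    induction i using Fin.lastCases with
    | last => exact Or.inl rfl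
    | cast i => exact Or.inr ⟨i, rfl⟩
  · rintro (rfl | ⟨i, rfl⟩)
    · exact ⟨Fin.last n, rfl⟩
    · exact ⟨i.castSucc, rfl⟩

lemma crpStep_eq (θ : ℝ) (hθ : 0 < θ) (n : ℕ) (c : Fin n → ℕ) (j : ℕ) :
    crpStep 0 θ n c j =
      if 0 < ((univ : Finset (Fin n)).filter fun i => c i = j).card then
        (((univ : Finset (Fin n)).filter fun i => c i = j).card : ℝ) / (n + θ)
      else if j = (Finset.image c univ).card then θ / (n + θ) else 0 := by
  unfold crpStep
  rcases Nat.eq_zero_or_pos n with rfl | hn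
  · simp only [if_pos rfl]
    have h1 : ((univ : Finset (Fin 0)).filter fun i => c i = j) = ∅ := by simp
    have h2 : (Finset.image c (univ : Finset (Fin 0))) = ∅ := by simp
    rw [h1, h2]
    simp only [Finset.card_empty, lt_irrefl, if_false]
    rcases eq_or_ne j 0 with rfl | hj
    · simp
      exact (div_self hθ.ne').symm
    · simp [hj]
  · rw [if_neg hn.ne']
    simp [sub_zero, mul_zero, zero_add]

/-- Key computation: probability times the Pochhammer denominator. -/
lemma crp_key (θ : ℝ) (hθ : 0 < θ) :
    ∀ (n : ℕ) (c : Fin n → ℕ),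
      crpProb 0 θ n c * (ascPochhammer ℝ n).eval θ =
        if Canon c then
          θ ^ (Finset.image c univ).card *
            ∏ v ∈ Finset.image c univ,
              ((((univ : Finset (Fin n)).filter fun i => c i = v).card - 1).factorial : ℝ)
        else 0 := by
  intro n
  induction n with
  | zero =>
    intro c
    have h2 : (Finset.image c (univ : Finset (Fin 0))) = ∅ := by simp
    simp [crpProb, Canon, h2, ascPochhammer]
  | succ n ih =>
    intro c
    set c' := Fin.init c with hc'
    set j := c (Fin.last n) with hj
    set t := ((univ : Finset (Fin n)).filter fun i => c' i = j).card with ht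
    set m := (Finset.image c' univ).card with hm
    have hpoch : (ascPochhammer ℝ (n+1)).eval θ = (ascPochhammer ℝ n).eval θ * (θ + n) :=
      ascPochhammer_succ_eval n θ
    have hpochpos : (0:ℝ) < (ascPochhammer ℝ n).eval θ := ascPochhammer_pos n θ hθ
    have hden : (0:ℝ) < (n:ℝ) + θ := by positivity
    have hprob : crpProb 0 θ (n+1) c = crpProb 0 θ n c' * crpStep 0 θ n c' j := rfl
    by_cases hcanon : Canon c'
    · -- c' is canonical
      have ihval := ih c'
      rw [if_pos hcanon] at ihval
      rw [hprob, hpoch, crpStep_eq θ hθ]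
      by_cases hT : 0 < t
      · -- existing table
        have hcanonc : Canon c := ⟨hcanon, Or.inl hT⟩
        rw [if_pos hcanonc]
        rw [← ht, if_pos hT]
        have hjmem : j ∈ Finset.image c' univ := by
          obtain ⟨i, hi⟩ := Finset.card_pos.mp hT
          simp only [Finset.mem_filter, Finset.mem_univ, true_and] at hi
          exact Finset.mem_image.mpr ⟨i, Finset.mem_univ i, hi⟩
        have himg : Finset.image c univ = Finset.image c' univ := by
          rw [image_succ c, ← hc', ← hj, Finset.insert_eq_self.mpr hjmem]
        have hfib : ∀ v, ((univ : Finset (Fin (n+1))).filter fun i => c i = v).card =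
            ((univ : Finset (Fin n)).filter fun i => c' i = v).card +
              (if j = v then 1 else 0) := by
          intro v; rw [fiber_card_succ c v, ← hc', ← hj]
        calc crpProb 0 θ n c' * ((t:ℝ) / (↑n + θ)) * ((ascPochhammer ℝ n).eval θ * (θ + ↑n))
            = (crpProb 0 θ n c' * (ascPochhammer ℝ n).eval θ) * ((t:ℝ) / (↑n + θ) * (θ + ↑n)) := by
              ring
          _ = (θ ^ m * ∏ v ∈ Finset.image c' univ,
                ((((univ : Finset (Fin n)).filter fun i => c' i = v).card - 1).factorial : ℝ)) * t := by
              rw [ihval]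
              congr 1
              rw [div_mul_eq_mul_div, add_comm θ (n:ℝ), mul_div_assoc,
                div_self hden.ne', mul_one]
          _ = θ ^ (Finset.image c univ).card * ∏ v ∈ Finset.image c univ,
                ((((univ : Finset (Fin (n+1))).filter fun i => c i = v).card - 1).factorial : ℝ) := by
              rw [himg, ← hm]
              rw [← Finset.mul_prod_erase _ _ hjmem, ← Finset.mul_prod_erase _ _ hjmem]
              have herase : ∀ v ∈ (Finset.image c' univ).erase j,
                  ((((univ : Finset (Fin (n+1))).filter fun i => c i = v).card - 1).factorial : ℝ) =
                  ((((univ : Finset (Fin n)).filter fun i => c' i = v).card - 1).factorial : ℝ) := by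
                intro v hv
                have hne : j ≠ v := fun h => (Finset.ne_of_mem_erase hv) h.symm
                rw [hfib v, if_neg hne, add_zero]
              rw [Finset.prod_congr rfl herase]
              have hjfib : ((univ : Finset (Fin (n+1))).filter fun i => c i = j).card = t + 1 := by
                rw [hfib j, if_pos rfl, ← ht]
              rw [hjfib]
              have : ((t + 1 - 1).factorial : ℝ) = t * ((t-1).factorial : ℝ) := by
                rw [Nat.add_sub_cancel]
                rw_mod_cast [← Nat.mul_factorial_pred hT.ne']
              rw [this]; ring
      · -- new table or invalid
        rw [← ht, if_neg hT]
        have ht0 : t = 0 := Nat.eq_zero_of_not_pos hT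
        by_cases hjm : j = m
        · have hcanonc : Canon c := ⟨hcanon, Or.inr hjm⟩
          rw [if_pos hcanonc, ← hm, if_pos hjm]
          have hjnot : j ∉ Finset.image c' univ := by
            intro hmem
            obtain ⟨i, -, hi⟩ := Finset.mem_image.mp hmem
            have : i ∈ (univ : Finset (Fin n)).filter fun i => c' i = j :=
              Finset.mem_filter.mpr ⟨Finset.mem_univ i, hi⟩
            exact absurd (ht.symm.trans ht0) (Finset.card_ne_zero_of_mem this)
          have himg : Finset.image c univ = insert j (Finset.image c' univ) := by
            rw [image_succ c]
          have hcard : (Finset.image c univ).card = m + 1 := by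
            rw [himg, Finset.card_insert_of_notMem hjnot, hm]
          have hfib : ∀ v, ((univ : Finset (Fin (n+1))).filter fun i => c i = v).card =
              ((univ : Finset (Fin n)).filter fun i => c' i = v).card +
                (if j = v then 1 else 0) := by
            intro v; rw [fiber_card_succ c v, ← hc', ← hj]
          calc crpProb 0 θ n c' * (θ / (↑n + θ)) * ((ascPochhammer ℝ n).eval θ * (θ + ↑n))
              = (crpProb 0 θ n c' * (ascPochhammer ℝ n).eval θ) * (θ / (↑n + θ) * (θ + ↑n)) := by
                ring
            _ = (θ ^ m * ∏ v ∈ Finset.image c' univ,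
                  ((((univ : Finset (Fin n)).filter fun i => c' i = v).card - 1).factorial : ℝ)) * θ := by
                rw [ihval]
                congr 1
                rw [div_mul_eq_mul_div, add_comm θ (n:ℝ), mul_div_assoc,
                  div_self hden.ne', mul_one]
            _ = θ ^ (Finset.image c univ).card * ∏ v ∈ Finset.image c univ,
                  ((((univ : Finset (Fin (n+1))).filter fun i => c i = v).card - 1).factorial : ℝ) := by
                rw [hcard, himg, Finset.prod_insert hjnot]
                have h1 : ((univ : Finset (Fin (n+1))).filter fun i => c i = j).card = 1 := by
                  rw [hfib j, if_pos rfl, ← ht, ht0]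
                rw [h1]
                have herase : ∀ v ∈ Finset.image c' univ,
                    ((((univ : Finset (Fin (n+1))).filter fun i => c i = v).card - 1).factorial : ℝ) =
                    ((((univ : Finset (Fin n)).filter fun i => c' i = v).card - 1).factorial : ℝ) := by
                  intro v hv
                  have hne : j ≠ v := fun h => hjnot (h ▸ hv)
                  rw [hfib v, if_neg hne, add_zero]
                rw [Finset.prod_congr rfl herase]
                simp [pow_succ]
                ring
        · -- invalid step: probability 0, and not canonical
          rw [← hm, if_neg hjm]
          have hncanon : ¬ Canon c := by
            rintro ⟨-, h | h⟩
            · rw [← ht] at h; exact hT h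
            · rw [← hm] at h; exact hjm h
          rw [if_neg hncanon]
          ring
    · -- c' not canonical
      have hncanon : ¬ Canon c := fun h => hcanon h.1
      rw [if_neg hncanon]
      have ihval := ih c'
      rw [if_neg hcanon] at ihval
      have : crpProb 0 θ n c' = 0 := by
        rcases mul_eq_zero.mp ihval with h | h
        · exact h
        · exact absurd h hpochpos.ne'
      rw [hprob, this, zero_mul, zero_mul]

/-- Pointwise characterization of canonicity. -/
def CanonP {n : ℕ} (c : Fin n → ℕ) : Prop :=
  ∀ m : Fin n, (∃ i, i < m ∧ c i = c m) ∨
    c m = (((univ : Finset (Fin n)).filter fun i => i < m).image c).card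

lemma prefix_image_cast {n : ℕ} (c : Fin (n+1) → ℕ) (m : Fin n) :
    ((univ : Finset (Fin (n+1))).filter fun i => i < m.castSucc).image c =
      ((univ : Finset (Fin n)).filter fun i => i < m).image (Fin.init c) := by
  ext v
  simp only [Finset.mem_image, Finset.mem_filter, Finset.mem_univ, true_and]
  constructor
  · rintro ⟨i, hi, rfl⟩
    have hin : (i : ℕ) < n := lt_trans (by simpa [Fin.lt_def] using hi) m.isLt
    refine ⟨i.castLT hin, by simpa [Fin.lt_def] using hi, ?_⟩
    show c ((i.castLT hin).castSucc) = c i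
    rw [Fin.castSucc_castLT]
  · rintro ⟨i, hi, rfl⟩
    exact ⟨i.castSucc, Fin.castSucc_lt_castSucc_iff.mpr hi, rfl⟩

lemma prefix_image_last {n : ℕ} (c : Fin (n+1) → ℕ) :
    ((univ : Finset (Fin (n+1))).filter fun i => i < Fin.last n).image c =
      (Finset.image (Fin.init c) univ) := by
  ext v
  simp only [Finset.mem_image, Finset.mem_filter, Finset.mem_univ, true_and]
  constructor
  · rintro ⟨i, hi, rfl⟩
    have hin : (i : ℕ) < n := by simpa [Fin.lt_def] using hi
    refine ⟨i.castLT hin, ?_⟩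
    show c ((i.castLT hin).castSucc) = c i
    rw [Fin.castSucc_castLT]
  · rintro ⟨i, rfl⟩
    exact ⟨i.castSucc, Fin.castSucc_lt_last i, rfl⟩

lemma canon_iff {n : ℕ} (c : Fin n → ℕ) : Canon c ↔ CanonP c := by
  induction n with
  | zero => exact ⟨fun _ m => m.elim0, fun _ => trivial⟩
  | succ n ih =>
    constructor
    · rintro ⟨h1, h2⟩ m
      induction m using Fin.lastCases with
      | last =>
        rcases h2 with h | h
        · obtain ⟨i, hi⟩ := Finset.card_pos.mp h
          simp only [Finset.mem_filter, Finset.mem_univ, true_and] at hi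
          exact Or.inl ⟨i.castSucc, Fin.castSucc_lt_last i, hi⟩
        · exact Or.inr (by rw [prefix_image_last]; exact h)
      | cast m =>
        rcases (ih (Fin.init c)).mp h1 m with ⟨i, hlt, heq⟩ | h
        · exact Or.inl ⟨i.castSucc, Fin.castSucc_lt_castSucc_iff.mpr hlt, heq⟩
        · exact Or.inr (by rw [prefix_image_cast]; exact h)
    · intro h
      refine ⟨(ih (Fin.init c)).mpr ?_, ?_⟩
      · intro m
        rcases h m.castSucc with ⟨i, hlt, heq⟩ | hh
        · have hin : (i : ℕ) < n := lt_trans (by simpa [Fin.lt_def] using hlt) m.isLt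
          refine Or.inl ⟨i.castLT hin, by simpa [Fin.lt_def] using hlt, ?_⟩
          show c ((i.castLT hin).castSucc) = c m.castSucc
          rw [Fin.castSucc_castLT]; exact heq
        · exact Or.inr (by rw [← prefix_image_cast]; exact hh)
      · rcases h (Fin.last n) with ⟨i, hlt, heq⟩ | hh
        · left
          rw [Finset.card_pos]
          have hin : (i : ℕ) < n := by simpa [Fin.lt_def] using hlt
          refine ⟨i.castLT hin, Finset.mem_filter.mpr ⟨Finset.mem_univ _, ?_⟩⟩
          show c ((i.castLT hin).castSucc) = c (Fin.last n)
          rw [Fin.castSucc_castLT]; exact heq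
        · exact Or.inr (by rw [← prefix_image_last]; exact hh)

/-- The image of a canonical sequence is an initial segment of ℕ. -/
lemma canon_image {n : ℕ} (c : Fin n → ℕ) (hc : Canon c) :
    Finset.image c univ = Finset.range (Finset.image c univ).card := by
  induction n with
  | zero => simp
  | succ n ih =>
    obtain ⟨h1, h2⟩ := hc
    have hinit := ih (Fin.init c) h1
    rw [image_succ c]
    rcases h2 with h | h
    · have hjmem : c (Fin.last n) ∈ Finset.image (Fin.init c) univ := by
        obtain ⟨i, hi⟩ := Finset.card_pos.mp h
        simp only [Finset.mem_filter, Finset.mem_univ, true_and] at hi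
        exact Finset.mem_image.mpr ⟨i, Finset.mem_univ i, hi⟩
      have he : insert (c (Fin.last n)) (Finset.image (Fin.init c) univ) =
          Finset.image (Fin.init c) univ := Finset.insert_eq_self.mpr hjmem
      rw [he]; exact hinit
    · set k := (Finset.image (Fin.init c) univ).card with hk
      have hjnot : c (Fin.last n) ∉ Finset.image (Fin.init c) univ := by
        intro hmem; rw [hinit] at hmem; rw [h] at hmem
        exact Finset.notMem_range_self hmem
      rw [Finset.card_insert_of_notMem hjnot, h, hinit, Finset.card_range]
      exact (Finset.range_add_one).symm

/-- Two canonical sequences inducing the same relation are equal. -/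
lemma canon_unique : ∀ {n : ℕ} {c d : Fin n → ℕ}, Canon c → Canon d →
    (∀ i j, (c i = c j ↔ d i = d j)) → c = d := by
  intro n
  induction n with
  | zero => intro c d _ _ _; funext i; exact i.elim0
  | succ n ih =>
    rintro c d ⟨hc1, hc2⟩ ⟨hd1, hd2⟩ hrel
    have hinit : Fin.init c = Fin.init d :=
      ih hc1 hd1 (fun i j => hrel i.castSucc j.castSucc)
    have hlast : c (Fin.last n) = d (Fin.last n) := by
      rcases hc2 with h | h
      · obtain ⟨i, hi⟩ := Finset.card_pos.mp h
        simp only [Finset.mem_filter, Finset.mem_univ, true_and] at hi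
        have h1 : c i.castSucc = c (Fin.last n) := hi
        have h2 : d i.castSucc = d (Fin.last n) := (hrel _ _).mp h1
        have h3 : d i.castSucc = c i.castSucc := by
          show Fin.init d i = Fin.init c i
          rw [hinit]
        rw [← h2, h3, h1]
      · have hnotmem : c (Fin.last n) ∉ Finset.image (Fin.init c) univ := by
          rw [canon_image _ hc1, h]; exact Finset.notMem_range_self
        rcases hd2 with h' | h'
        · exfalso
          obtain ⟨i, hi⟩ := Finset.card_pos.mp h'
          simp only [Finset.mem_filter, Finset.mem_univ, true_and] at hi
          have h2 : c i.castSucc = c (Fin.last n) := (hrel _ _).mpr hi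
          exact hnotmem (Finset.mem_image.mpr ⟨i, Finset.mem_univ i, h2.symm ▸ rfl⟩)
        · rw [h, h', hinit]
    funext i
    induction i using Fin.lastCases with
    | last => exact hlast
    | cast i => exact congrFun hinit i

section Construction

variable {n : ℕ} (π : Finpartition (univ : Finset (Fin n)))

/-- The block containing `i`. -/
noncomputable def blk (i : Fin n) : Finset (Fin n) :=
  (π.exists_mem (Finset.mem_univ i)).choose

lemma blk_mem (i : Fin n) : blk π i ∈ π.parts :=
  (π.exists_mem (Finset.mem_univ i)).choose_spec.1

lemma mem_blk (i : Fin n) : i ∈ blk π i :=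
  (π.exists_mem (Finset.mem_univ i)).choose_spec.2

lemma blk_eq_of_mem {i : Fin n} {B : Finset (Fin n)} (hB : B ∈ π.parts) (hi : i ∈ B) :
    blk π i = B :=
  π.eq_of_mem_parts (blk_mem π i) hB (mem_blk π i) hi

lemma rel_iff_blk {i j : Fin n} :
    (∃ B ∈ π.parts, i ∈ B ∧ j ∈ B) ↔ blk π i = blk π j := by
  constructor
  · rintro ⟨B, hB, hi, hj⟩
    rw [blk_eq_of_mem π hB hi, blk_eq_of_mem π hB hj]
  · intro h
    exact ⟨blk π i, blk_mem π i, mem_blk π i, h ▸ mem_blk π j⟩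

/-- The minimum of the block containing `i`. -/
noncomputable def mu (i : Fin n) : Fin n := (blk π i).min' ⟨i, mem_blk π i⟩

lemma mu_mem (i : Fin n) : mu π i ∈ blk π i := Finset.min'_mem _ _

lemma mu_le (i : Fin n) : mu π i ≤ i := Finset.min'_le _ _ (mem_blk π i)

lemma blk_mu (i : Fin n) : blk π (mu π i) = blk π i :=
  blk_eq_of_mem π (blk_mem π i) (mu_mem π i)

lemma mu_congr {i j : Fin n} (h : blk π i = blk π j) : mu π i = mu π j := by
  unfold mu
  congr 1

lemma mu_mu (i : Fin n) : mu π (mu π i) = mu π i := mu_congr π (blk_mu π i)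

lemma mu_eq_iff {i j : Fin n} : mu π i = mu π j ↔ blk π i = blk π j := by
  refine ⟨fun h => ?_, mu_congr π⟩
  have h1 : mu π i ∈ blk π i := mu_mem π i
  have h2 : mu π i ∈ blk π j := h ▸ mu_mem π j
  exact π.eq_of_mem_parts (blk_mem π i) (blk_mem π j) h1 h2

/-- Rank of a value among the block minima. -/
noncomputable def rnk (v : Fin n) : ℕ :=
  ((Finset.image (mu π) univ).filter (· < v)).card

/-- The canonical table sequence of a partition. -/
noncomputable def canSeq (i : Fin n) : ℕ := rnk π (mu π i)

lemma rnk_lt_rnk {v w : Fin n} (hv : v ∈ Finset.image (mu π) univ) (hvw : v < w) :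
    rnk π v < rnk π w := by
  apply Finset.card_lt_card
  constructor
  · intro x hx
    simp only [Finset.mem_filter] at hx ⊢
    exact ⟨hx.1, lt_trans hx.2 hvw⟩
  · intro hsub
    have : v ∈ (Finset.image (mu π) univ).filter (· < w) :=
      Finset.mem_filter.mpr ⟨hv, hvw⟩
    have := hsub this
    simp only [Finset.mem_filter] at this
    exact lt_irrefl v this.2

lemma rnk_injOn {v w : Fin n} (hv : v ∈ Finset.image (mu π) univ)
    (hw : w ∈ Finset.image (mu π) univ) (h : rnk π v = rnk π w) : v = w := by
  rcases lt_trichotomy v w with hlt | heq | hlt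
  · exact absurd h (rnk_lt_rnk π hv hlt).ne
  · exact heq
  · exact absurd h.symm (rnk_lt_rnk π hw hlt).ne

lemma canSeq_eq_iff {i j : Fin n} : canSeq π i = canSeq π j ↔ mu π i = mu π j := by
  refine ⟨fun h => ?_, fun h => by unfold canSeq; rw [h]⟩
  exact rnk_injOn π (Finset.mem_image.mpr ⟨i, Finset.mem_univ i, rfl⟩)
    (Finset.mem_image.mpr ⟨j, Finset.mem_univ j, rfl⟩) h

lemma induces_canSeq : InducesPartition (canSeq π) π := by
  intro i j
  rw [canSeq_eq_iff, mu_eq_iff, ← rel_iff_blk]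

lemma canSeq_lt (i : Fin n) : canSeq π i < n := by
  have h1 : ((Finset.image (mu π) univ).filter (· < mu π i)) ⊆ Finset.Iio (mu π i) := by
    intro x hx
    simp only [Finset.mem_filter] at hx
    exact Finset.mem_Iio.mpr hx.2
  have h2 : canSeq π i ≤ (mu π i : ℕ) := by
    calc canSeq π i ≤ (Finset.Iio (mu π i)).card := Finset.card_le_card h1
    _ = (mu π i : ℕ) := Fin.card_Iio _
  exact lt_of_le_of_lt (le_trans h2 (Fin.le_def.mp (mu_le π i))) i.isLt

lemma canonP_canSeq : CanonP (canSeq π) := by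
  intro m
  rcases lt_or_eq_of_le (mu_le π m) with hlt | heq
  · exact Or.inl ⟨mu π m, hlt, by unfold canSeq; rw [mu_mu]⟩
  · right
    have himg : ((univ : Finset (Fin n)).filter fun i => i < m).image (canSeq π) =
        ((Finset.image (mu π) univ).filter (· < m)).image (rnk π) := by
      ext v
      simp only [Finset.mem_image, Finset.mem_filter, Finset.mem_univ, true_and]
      constructor
      · rintro ⟨i, hi, rfl⟩
        exact ⟨mu π i, ⟨⟨i, rfl⟩, lt_of_le_of_lt (mu_le π i) hi⟩, rfl⟩
      · rintro ⟨w, ⟨⟨i, rfl⟩, hw⟩, rfl⟩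
        refine ⟨mu π i, hw, ?_⟩
        unfold canSeq
        rw [mu_mu]
    rw [himg]
    rw [Finset.card_image_of_injOn (fun v hv w hw h => by
      simp only [Finset.coe_filter, Set.mem_setOf_eq, Finset.mem_coe] at hv hw
      exact rnk_injOn π hv.1 hw.1 h)]
    show rnk π (mu π m) = _
    rw [heq]
    unfold rnk
    rfl

end Construction

lemma fiber_eq_blk {n : ℕ} (π : Finpartition (univ : Finset (Fin n))) (i : Fin n) :
    ((univ : Finset (Fin n)).filter fun j => canSeq π j = canSeq π i) = blk π i := by
  ext j
  simp only [Finset.mem_filter, Finset.mem_univ, true_and]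
  constructor
  · intro h
    obtain ⟨B, hB, hj, hi⟩ := (induces_canSeq π j i).mp h
    rw [blk_eq_of_mem π hB hi]
    exact hj
  · intro hj
    exact (induces_canSeq π j i).mpr ⟨blk π i, blk_mem π i, hj, mem_blk π i⟩

theorem ewens_sampling_formula' (θ : ℝ) (hθ : 0 < θ) (n : ℕ)
    (π : Finpartition (univ : Finset (Fin n))) :
    crpPartitionProb 0 θ n π =
      θ ^ π.parts.card * (∏ B ∈ π.parts, ((B.card - 1).factorial : ℝ)) /
        (ascPochhammer ℝ n).eval θ := by
  classical
  set rc : Fin n → ℕ := canSeq π with hrc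
  have hcanon : Canon rc := (canon_iff rc).mpr (canonP_canSeq π)
  set r : Fin n → Fin n := fun i => ⟨rc i, canSeq_lt π i⟩ with hr
  have hrcoe : (fun i => ((r i : ℕ))) = rc := rfl
  have hpoch : (0:ℝ) < (ascPochhammer ℝ n).eval θ := ascPochhammer_pos n θ hθ
  have hmap : ∀ v ∈ Finset.image rc univ,
      ((univ : Finset (Fin n)).filter fun j => rc j = v) ∈ π.parts := by
    intro v hv
    obtain ⟨i, -, rfl⟩ := Finset.mem_image.mp hv
    rw [hrc, fiber_eq_blk π i]
    exact blk_mem π i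
  have hinj : ∀ v ∈ Finset.image rc univ, ∀ w ∈ Finset.image rc univ,
      ((univ : Finset (Fin n)).filter fun j => rc j = v) =
        ((univ : Finset (Fin n)).filter fun j => rc j = w) → v = w := by
    intro v hv w hw h
    obtain ⟨i, -, rfl⟩ := Finset.mem_image.mp hv
    have hmem : i ∈ (univ : Finset (Fin n)).filter fun j => rc j = rc i :=
      Finset.mem_filter.mpr ⟨Finset.mem_univ i, rfl⟩
    rw [h] at hmem
    exact (Finset.mem_filter.mp hmem).2
  have hsurj : ∀ B ∈ π.parts, ∃ v, ∃ _ : v ∈ Finset.image rc univ,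
      ((univ : Finset (Fin n)).filter fun j => rc j = v) = B := by
    intro B hB
    have hBne : B.Nonempty := by
      rw [Finset.nonempty_iff_ne_empty]
      intro h
      rw [h] at hB
      exact π.bot_notMem hB
    obtain ⟨i, hi⟩ := hBne
    refine ⟨rc i, Finset.mem_image.mpr ⟨i, Finset.mem_univ i, rfl⟩, ?_⟩
    rw [hrc, fiber_eq_blk π i]
    exact blk_eq_of_mem π hB hi
  have hcard : (Finset.image rc univ).card = π.parts.card :=
    Finset.card_bij (fun v _ => (univ : Finset (Fin n)).filter fun j => rc j = v)
      hmap hinj hsurj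
  have hprod : (∏ v ∈ Finset.image rc univ,
        ((((univ : Finset (Fin n)).filter fun i => rc i = v).card - 1).factorial : ℝ)) =
      ∏ B ∈ π.parts, ((B.card - 1).factorial : ℝ) :=
    Finset.prod_bij (fun v _ => (univ : Finset (Fin n)).filter fun j => rc j = v)
      hmap hinj hsurj (fun v _ => rfl)
  unfold crpPartitionProb
  rw [Finset.sum_eq_single_of_mem r (Finset.mem_univ r) ?h0]
  · rw [hrcoe, if_pos (by rw [hrc]; exact induces_canSeq π)]
    have key := crp_key θ hθ n rc
    rw [if_pos hcanon] at key
    rw [eq_div_iff hpoch.ne', key, hcard, hprod]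
  case h0 =>
    intro b _ hb
    by_cases hI : InducesPartition (fun i => ((b i : ℕ))) π
    · rw [if_pos hI]
      have hnc : ¬ Canon (fun i => ((b i : ℕ))) := by
        intro hc
        apply hb
        have heq : (fun i => ((b i : ℕ))) = rc := by
          apply canon_unique hc hcanon
          intro i j
          rw [hI i j]
          exact (induces_canSeq π i j).symm
        funext i
        exact Fin.ext (congrFun heq i)
      have key := crp_key θ hθ n (fun i => ((b i : ℕ)))
      rw [if_neg hnc] at key
      rcases mul_eq_zero.mp key with h | h
      · exact h
      · exact absurd h hpoch.ne'
    · rw [if_neg hI]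

/-- Ewens sampling formula: for the Chinese restaurant process with parameters
`(0, θ)`, `θ > 0`, the probability of the partition `π` with `k` blocks of
sizes `n₁, …, n_k` is `θ^k ∏ᵢ (nᵢ - 1)! / θ^{↑n}`. -/
theorem ewens_sampling_formula (θ : ℝ) (hθ : 0 < θ) (n : ℕ)
    (π : Finpartition (univ : Finset (Fin n))) :
    crpPartitionProb 0 θ n π =
      θ ^ π.parts.card * (∏ B ∈ π.parts, ((B.card - 1).factorial : ℝ)) /
        (ascPochhammer ℝ n).eval θ := by
  exact ewens_sampling_formula' θ hθ n π
end
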